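/- arXiv:2205.04077 — 5 statements merged into one kernel-verified Lean document; each statement's English description precedes it below -/
import Mathlib

section
/- If A and B are compact convex sets contained in an affine hyperplane of ℝⁿ not passing through the origin, then A and B are disjoint if and only if 0 is not in the convex hull of A ∪ (-B). -/
open RealInnerProductSpace

lemma hyperplane_convex_aux {n : ℕ} (u : EuclideanSpace ℝ (Fin n)) (r : ℝ) :
    Convex ℝ {x : EuclideanSpace ℝ (Fin n) | ⟪x, u⟫ = r} :=
  convex_hyperplane ⟨fun x y => inner_add_left x y u, fun m x => real_inner_smul_left x u m⟩ r

/-- If `A` and `B` are compact convex sets contained in an affine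
hyperplane `{x | ⟪x, u⟫ = c}` (with `c ≠ 0`) of `ℝⁿ`, then `A` and `B` are disjoint
iff `0 ∉ conv (A ∪ (-B))`. -/
theorem disjoint_iff_zero_not_mem_convexHull_union_neg
    {n : ℕ} (A B : Set (EuclideanSpace ℝ (Fin n)))
    (hAcpt : IsCompact A) (hBcpt : IsCompact B)
    (hAconv : Convex ℝ A) (hBconv : Convex ℝ B)
    (u : EuclideanSpace ℝ (Fin n)) (c : ℝ) (hc : c ≠ 0)
    (hA : A ⊆ {x | ⟪x, u⟫ = c}) (hB : B ⊆ {x | ⟪x, u⟫ = c}) :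
    Disjoint A B ↔ (0 : EuclideanSpace ℝ (Fin n)) ∉ convexHull ℝ (A ∪ (-B)) := by
  constructor
  · intro hdisj h0
    rcases A.eq_empty_or_nonempty with hAe | hAne
    · rw [hAe, Set.empty_union] at h0
      have hBsub : -B ⊆ {x : EuclideanSpace ℝ (Fin n) | ⟪x, u⟫ = -c} := by
        rintro x hx
        have := hB hx
        simp only [Set.mem_setOf_eq] at this ⊢
        rw [show x = -(-x) by simp, inner_neg_left, this]
      have := convexHull_min hBsub (hyperplane_convex_aux u (-c)) h0
      simp only [Set.mem_setOf_eq, inner_zero_left] at this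
      exact hc (by linarith)
    rcases B.eq_empty_or_nonempty with hBe | hBne
    · rw [hBe, Set.neg_empty, Set.union_empty] at h0
      have := convexHull_min hA (hyperplane_convex_aux u c) h0
      simp only [Set.mem_setOf_eq, inner_zero_left] at this
      exact hc this.symm
    · rw [hAconv.convexHull_union (hBconv.neg) hAne (hBne.neg), mem_convexJoin] at h0
      obtain ⟨x, hx, y, hy, a, b, ha, hb, hab, hxy⟩ := h0
      have hw : -y ∈ B := hy
      have hx' := hA hx
      have hw' := hB hw
      simp only [Set.mem_setOf_eq] at hx' hw'
      have hinner : a * c + b * (-c) = 0 := by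
        have h1 : ⟪a • x + b • y, u⟫ = 0 := by rw [hxy, inner_zero_left]
        rw [inner_add_left, real_inner_smul_left, real_inner_smul_left, hx',
          show ⟪y, u⟫ = -c by rw [show y = -(-y) by simp, inner_neg_left, hw']] at h1
        exact h1
      have hb2 : b = a := by
        have : (a - b) * c = 0 := by linarith [hinner]
        rcases mul_eq_zero.mp this with h | h
        · linarith
        · exact absurd h hc
      subst hb2
      have ha2 : b = 1/2 := by linarith
      subst ha2
      have hxw : x = -y := by
        have h2 : (1/2 : ℝ) • (x - -y) = 0 := by
          rw [← hxy]; module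
        rcases smul_eq_zero.mp h2 with h | h
        · norm_num at h
        · exact sub_eq_zero.mp h
      exact hdisj.ne_of_mem hx hw hxw
  · intro h0
    rw [Set.disjoint_left]
    intro x hxA hxB
    apply h0
    have h1 : x ∈ A ∪ -B := Or.inl hxA
    have h2 : -x ∈ A ∪ -B := Or.inr (by simpa [Set.mem_neg] using hxB)
    have := (convex_convexHull ℝ (A ∪ -B)) (subset_convexHull ℝ _ h1)
      (subset_convexHull ℝ _ h2) (by norm_num : (0:ℝ) ≤ 1/2) (by norm_num : (0:ℝ) ≤ 1/2)
      (by norm_num)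
    simpa using this
end

section
/- Let B₁,…,B_ℓ, C₁,…,C_m be convex sets in ℝ^d such that conv(B₁ ∪ ⋯ ∪ B_ℓ) ∩ conv(C₁ ∪ ⋯ ∪ C_m) ≠ ∅. Then there exist points b_i ∈ B_i and c_j ∈ C_j such that conv{b₁,…,b_ℓ} ∩ conv{c₁,…,c_m} ≠ ∅. -/
open Finset Set

private lemma aux_choose_points {E : Type*} [AddCommGroup E] [Module ℝ E]
    {n : ℕ} (B : Fin n → Set E) (hconv : ∀ i, Convex ℝ (B i))
    (hne : ∀ i, (B i).Nonempty) {x : E} (hx : x ∈ convexHull ℝ (⋃ i, B i)) :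
    ∃ b : Fin n → E, (∀ i, b i ∈ B i) ∧ x ∈ convexHull ℝ (Set.range b) := by
  rw [mem_convexHull_iff_exists_fintype] at hx
  obtain ⟨ι, _, w, z, hw₀, hw₁, hz, hxx⟩ := hx
  choose f hf using fun k => Set.mem_iUnion.mp (hz k)
  set tw : Fin n → ℝ := fun i => ∑ k ∈ Finset.univ.filter (fun k => f k = i), w k with htw
  have htw₀ : ∀ i, 0 ≤ tw i := fun i => Finset.sum_nonneg fun k _ => hw₀ k
  have htw₁ : ∑ i, tw i = 1 := by
    rw [htw]
    rw [Finset.sum_fiberwise]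
    exact hw₁
  classical
  set b : Fin n → E := fun i =>
    if h : tw i = 0 then (hne i).choose
    else (Finset.univ.filter (fun k => f k = i)).centerMass w z with hb
  have hbB : ∀ i, b i ∈ B i := by
    intro i
    rw [hb]
    by_cases h : tw i = 0
    · simpa [h] using (hne i).choose_spec
    · simp only [h, dif_neg, not_false_iff]
      exact (hconv i).centerMass_mem (fun k _ => hw₀ k)
        (lt_of_le_of_ne (htw₀ i) (Ne.symm h))
        (fun k hk => by
          rw [Finset.mem_filter] at hk
          exact hk.2 ▸ hf k)
  refine ⟨b, hbB, ?_⟩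
  have hsum : ∑ i, tw i • b i = x := by
    rw [← hxx, ← Finset.sum_fiberwise Finset.univ f (fun k => w k • z k)]
    refine Finset.sum_congr rfl fun i _ => ?_
    by_cases h : tw i = 0
    · have hz0 : ∀ k ∈ Finset.univ.filter (fun k => f k = i), w k = 0 := by
        rw [← Finset.sum_eq_zero_iff_of_nonneg (fun k _ => hw₀ k)]
        exact h.symm ▸ rfl
      rw [h, zero_smul]
      exact (Finset.sum_eq_zero fun k hk => by rw [hz0 k hk, zero_smul]).symm
    · rw [hb]
      simp only [h, dif_neg, not_false_iff]
      rw [Finset.centerMass]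
      exact smul_inv_smul₀ h _
  have hmem := Finset.univ.centerMass_mem_convexHull (w := tw) (z := b)
    (fun i _ => htw₀ i) (by rw [htw₁]; exact zero_lt_one) (fun i _ => Set.mem_range_self i)
  rwa [Finset.centerMass_eq_of_sum_1 _ _ htw₁, hsum] at hmem

/-- If `B₁,…,B_ℓ, C₁,…,C_m` are nonempty convex sets in `ℝ^d` whose
family convex hulls intersect, then one can choose points `b i ∈ B i` and `c j ∈ C j`
with intersecting convex hulls. -/
theorem exists_points_convexHull_inter
    {d ℓ m : ℕ} (B : Fin ℓ → Set (EuclideanSpace ℝ (Fin d)))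
    (C : Fin m → Set (EuclideanSpace ℝ (Fin d)))
    (hBconv : ∀ i, Convex ℝ (B i)) (hCconv : ∀ j, Convex ℝ (C j))
    (hBne : ∀ i, (B i).Nonempty) (hCne : ∀ j, (C j).Nonempty)
    (h : (convexHull ℝ (⋃ i, B i) ∩ convexHull ℝ (⋃ j, C j)).Nonempty) :
    ∃ (b : Fin ℓ → EuclideanSpace ℝ (Fin d)) (c : Fin m → EuclideanSpace ℝ (Fin d)),
      (∀ i, b i ∈ B i) ∧ (∀ j, c j ∈ C j) ∧
      (convexHull ℝ (Set.range b) ∩ convexHull ℝ (Set.range c)).Nonempty := by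
  obtain ⟨x, hxB, hxC⟩ := h
  obtain ⟨b, hb, hxb⟩ := aux_choose_points B hBconv hBne hxB
  obtain ⟨c, hc, hxc⟩ := aux_choose_points C hCconv hCne hxC
  exact ⟨b, c, hb, hc, x, hxb, hxc⟩
end

section
/- Let F̌ be a finite family of compact convex polytopes in ℝ^{d+1}, each not containing the origin. For a point y ∈ ℝ^{d+1} \ {0}, define F̌(y) = {P ∈ F̌ : x ⬝ y > 0 for all x ∈ P}. Then F̌(y) is locally constant in y away from the union of the orthogonal complements of the vertices of the polytopes: if y and y' lie in the same connected component of S^d minus the hyperplanes {v^⊥ : v a vertex of some P ∈ F̌}, then F̌(y) = F̌(y'). -/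
open RealInnerProductSpace

/-- Sign of a continuous nonvanishing function is constant on a preconnected set. -/
lemma sign_const_on_preconnected {X : Type*} [TopologicalSpace X]
    {C : Set X} (hC : IsPreconnected C) {f : X → ℝ} (hf : Continuous f)
    (hne : ∀ z ∈ C, f z ≠ 0) {y y' : X} (hy : y ∈ C) (hy' : y' ∈ C) :
    0 < f y ↔ 0 < f y' := by
  have himg : IsPreconnected (f '' C) := hC.image f hf.continuousOn
  have hord := himg.ordConnected
  constructor
  · intro h
    by_contra h'
    have hlt : f y' < 0 := lt_of_le_of_ne (not_lt.1 h') (hne y' hy')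
    have : (0 : ℝ) ∈ f '' C :=
      hord.out ⟨y', hy', rfl⟩ ⟨y, hy, rfl⟩ ⟨hlt.le, h.le⟩
    obtain ⟨z, hz, hz0⟩ := this
    exact hne z hz hz0
  · intro h
    by_contra h'
    have hlt : f y < 0 := lt_of_le_of_ne (not_lt.1 h') (hne y hy)
    have : (0 : ℝ) ∈ f '' C :=
      hord.out ⟨y, hy, rfl⟩ ⟨y', hy', rfl⟩ ⟨hlt.le, h.le⟩
    obtain ⟨z, hz, hz0⟩ := this
    exact hne z hz hz0

/-- Positivity on a convex hull is equivalent to positivity on the generating set. -/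
lemma pos_on_hull_iff {E : Type*} [NormedAddCommGroup E] [InnerProductSpace ℝ E]
    (s : Set E) (w : E) :
    (∀ x ∈ convexHull ℝ s, 0 < ⟪x, w⟫) ↔ (∀ v ∈ s, 0 < ⟪v, w⟫) := by
  constructor
  · intro h v hv
    exact h v (subset_convexHull ℝ s hv)
  · intro h
    have hconv : Convex ℝ {x : E | 0 < ⟪x, w⟫} := by
      have := convex_halfSpace_gt (f := fun x : E => ⟪x, w⟫)
        ⟨fun a b => inner_add_left a b w, fun c a => real_inner_smul_left a w c⟩ 0
      simpa using this
    exact fun x hx => convexHull_min h hconv hx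

/-- Let `F̌` be a finite family of compact convex polytopes
`P i = conv (V i)` in `ℝ^{d+1}` (with `V i` a finite nonempty vertex set), none
containing the origin.  The family `F̌(y) = {P : x ⬝ y > 0 ∀ x ∈ P}` is locally
constant away from the vertex hyperplanes `v^⊥`: if `y, y'` lie in a common connected
subset of `S^d` avoiding all hyperplanes `{z | ⟪v, z⟫ = 0}` (`v` a vertex), then
`F̌(y) = F̌(y')`. -/
theorem polytope_side_family_locally_constant
    {d : ℕ} {ι : Type*} [Fintype ι] (V : ι → Finset (EuclideanSpace ℝ (Fin (d + 1))))
    (hVne : ∀ i, (V i).Nonempty)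
    (hzero : ∀ i, (0 : EuclideanSpace ℝ (Fin (d + 1))) ∉
      convexHull ℝ (V i : Set (EuclideanSpace ℝ (Fin (d + 1)))))
    (C : Set (EuclideanSpace ℝ (Fin (d + 1)))) (hCconn : IsConnected C)
    (hCsph : C ⊆ Metric.sphere (0 : EuclideanSpace ℝ (Fin (d + 1))) 1)
    (hCavoid : ∀ z ∈ C, ∀ i, ∀ v ∈ V i, ⟪v, z⟫ ≠ 0)
    (y y' : EuclideanSpace ℝ (Fin (d + 1))) (hy : y ∈ C) (hy' : y' ∈ C) :
    ∀ i, (∀ x ∈ convexHull ℝ (V i : Set (EuclideanSpace ℝ (Fin (d + 1)))), 0 < ⟪x, y⟫) ↔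
      (∀ x ∈ convexHull ℝ (V i : Set (EuclideanSpace ℝ (Fin (d + 1)))), 0 < ⟪x, y'⟫) := by
  intro i
  rw [pos_on_hull_iff, pos_on_hull_iff]
  constructor <;> intro h v hv
  · exact (sign_const_on_preconnected hCconn.isPreconnected
      (continuous_const.inner continuous_id) (fun z hz => hCavoid z hz i v hv)
      hy hy').mp (h v hv)
  · exact (sign_const_on_preconnected hCconn.isPreconnected
      (continuous_const.inner continuous_id) (fun z hz => hCavoid z hz i v hv)
      hy hy').mpr (h v hv)
end

section
/- Monotonicity property: Let F̌ be a finite family of convex polytopes in ℝ^{d+1}, and for each nonzero y define F̌(y) = {P ∈ F̌ : x ⬝ y > 0 for all x ∈ P}. Let σ ⊆ τ be cells of the arrangement of the hyperplanes {v^⊥} (v ranging over vertices of the polytopes) on S^d, with σ contained in the closure of τ. Then for y ∈ relint(σ) and y' ∈ relint(τ), F̌(y) ⊆ F̌(y'). -/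
open RealInnerProductSpace

theorem Real.pos_of_sign_eq_of_pos {a b : ℝ} (ha : 0 < a) (h : Real.sign a = Real.sign b) :
    0 < b := by
  rw [Real.sign_of_pos ha] at h
  rcases lt_trichotomy b 0 with hb | hb | hb
  · rw [Real.sign_of_neg hb] at h; norm_num at h
  · rw [hb, Real.sign_zero] at h; norm_num at h
  · exact hb

theorem inner_pos_of_mem_convexHull {E : Type*} [NormedAddCommGroup E] [InnerProductSpace ℝ E]
    {s : Set E} {y : E} (hs : ∀ v ∈ s, 0 < ⟪v, y⟫) : ∀ x ∈ convexHull ℝ s, 0 < ⟪x, y⟫ :=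
  fun _ hx => convexHull_min hs (convex_halfSpace_gt ((innerₛₗ ℝ).flip y).isLinear 0) hx

/-- The face relation `σ ⊆ τ` between arrangement cells is encoded by the sign condition `hface`:
each vertex `v` either vanishes on `y ∈ relint σ` or has the same nonzero sign on `y` and on
`y' ∈ relint τ`. -/
theorem side_family_monotone_general
    {d : ℕ} {ι : Type*} (V : ι → Finset (EuclideanSpace ℝ (Fin (d + 1))))
    (y y' : EuclideanSpace ℝ (Fin (d + 1)))
    (hface : ∀ i, ∀ v ∈ V i, ⟪v, y⟫ = 0 ∨
      (⟪v, y⟫ ≠ 0 ∧ ⟪v, y'⟫ ≠ 0 ∧ Real.sign ⟪v, y⟫ = Real.sign ⟪v, y'⟫)) :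
    ∀ i, (∀ x ∈ convexHull ℝ (V i : Set (EuclideanSpace ℝ (Fin (d + 1)))), 0 < ⟪x, y⟫) →
      ∀ x ∈ convexHull ℝ (V i : Set (EuclideanSpace ℝ (Fin (d + 1)))), 0 < ⟪x, y'⟫ := by
  intro i hpos
  refine inner_pos_of_mem_convexHull fun v hv => ?_
  have hvy : 0 < ⟪v, y⟫ := hpos v (subset_convexHull ℝ _ hv)
  rcases hface i v hv with hzero | ⟨-, -, hsign⟩
  · exact absurd hzero hvy.ne'
  · exact Real.pos_of_sign_eq_of_pos hvy hsign

/-- **monotonicity property.** Let `(conv (V i))` be a finite family of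
polytopes in `ℝ^{d+1}` with vertex sets `V i`.  Suppose `y` lies in (the relative
interior of) a face of the arrangement cell containing `y'`, expressed by the sign
condition: for every vertex `v`, either `⟪v, y⟫ = 0` or `⟪v, y⟫` and `⟪v, y'⟫` are
both nonzero with the same sign.  Then `F̌(y) ⊆ F̌(y')`, i.e. every polytope strictly
on the positive side of `y^⊥` is strictly on the positive side of `y'^⊥`. -/
theorem side_family_monotone
    {d : ℕ} {ι : Type*} [Fintype ι] (V : ι → Finset (EuclideanSpace ℝ (Fin (d + 1))))
    (hVne : ∀ i, (V i).Nonempty)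
    (y y' : EuclideanSpace ℝ (Fin (d + 1))) (hy : y ≠ 0) (hy' : y' ≠ 0)
    (hface : ∀ i, ∀ v ∈ V i, ⟪v, y⟫ = 0 ∨
      (⟪v, y⟫ ≠ 0 ∧ ⟪v, y'⟫ ≠ 0 ∧ Real.sign ⟪v, y⟫ = Real.sign ⟪v, y'⟫)) :
    ∀ i, (∀ x ∈ convexHull ℝ (V i : Set (EuclideanSpace ℝ (Fin (d + 1)))), 0 < ⟪x, y⟫) →
      ∀ x ∈ convexHull ℝ (V i : Set (EuclideanSpace ℝ (Fin (d + 1)))), 0 < ⟪x, y'⟫ :=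
  side_family_monotone_general V y y' hface
end

section
/- Let K be a free ℤ₂ simplicial complex such that for a family of vertex subsets {W_σ} indexed by the vertices σ of a ℤ₂-simplicial complex L of dimension k+1, each induced subcomplex K[W_σ] is k-connected, W_{-σ} = -W_σ, and W_{σ₁} ⊆ W_{σ₂} whenever σ₁ ≤ σ₂ in the order defining simplices of L (simplices of L are chains σ₀ < ⋯ < σ_i). Then there exists a continuous ℤ₂-map f : |L| → |K| such that the image of each simplex σ₀ < ⋯ < σ_i lies in |K[W_{σ_i}]|. -/
open scoped Classical

/-- The geometric realization of an abstract simplicial complex `K` on a finite vertex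
set `V`. -/
noncomputable def realization {V : Type*} [Fintype V] (K : Finset V → Prop) :
    Set (V → ℝ) :=
  {f | (∀ v, 0 ≤ f v) ∧ (∑ v, f v) = 1 ∧ K (Finset.univ.filter fun v => f v ≠ 0)}

/-- A subspace `X` of `V → ℝ` is `k`-connected: it is nonempty and every continuous
map `S^n → X` with `n ≤ k` extends continuously to the disk `D^{n+1}`. -/
def KConnected {V : Type*} [Fintype V] (X : Set (V → ℝ)) (k : ℕ) : Prop :=
  X.Nonempty ∧ ∀ n : ℕ, n ≤ k →
    ∀ f : C(Metric.sphere (0 : EuclideanSpace ℝ (Fin (n + 1))) 1, X),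
      ∃ g : C(Metric.closedBall (0 : EuclideanSpace ℝ (Fin (n + 1))) 1, X),
        ∀ x : Metric.sphere (0 : EuclideanSpace ℝ (Fin (n + 1))) 1,
          g ⟨x.1, Metric.sphere_subset_closedBall x.2⟩ = f x

/-!
The map is built skeleton by skeleton on the order complex. Once it is defined, continuous and
equivariant on the simplices of chains with at most `N` elements, take a chain `G` with `N + 1`
elements and top element `m`. Monotonicity of `W` puts the image of `∂G` in `|K[W m]|`, and since
`|G|` is a closed ball with boundary sphere `∂G` (barycentric coordinates of an affine basis
followed by the gauge homeomorphism of a convex body), `k`-connectedness of `|K[W m]|` extends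
the map over `|G|` (the sphere has dimension `N - 1 ≤ k` since chains have at most `k + 2`
elements). The involution moves every chain, so the extension can be chosen freely on one chain
of each pair `{G, νG}` and transported to the other, which keeps the map equivariant.
-/

open Set Function Metric

namespace OrderComplex

section General

lemma image_image_of_involutive {ι : Type*} [DecidableEq ι] {σ : ι → ι} (hσ : Involutive σ)
    (G : Finset ι) : (G.image σ).image σ = G := by
  rw [Finset.image_image, hσ.comp_self, Finset.image_id]

lemma exists_isGreatest_of_isChain {P : Type*} [PartialOrder P] {G : Finset P}
    (hG : IsChain (· ≤ ·) (G : Set P)) (hne : G.Nonempty) : ∃ m, IsGreatest (G : Set P) m := by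
  obtain ⟨m, hm⟩ := Finset.exists_maximal hne
  refine ⟨m, hm.1, fun a ha => ?_⟩
  rcases hG.total ha hm.1 with h | h
  exacts [h, hm.2 ha h]

lemma isChain_image {P : Type*} [PartialOrder P] {νP : P → P} (hνP : Monotone νP) {G : Finset P}
    (hG : IsChain (· ≤ ·) (G : Set P)) : IsChain (· ≤ ·) (G.image νP : Set P) := by
  rw [Finset.coe_image]
  exact hG.image_of_map_rel _ _ _ fun _ _ h => hνP h

lemma exists_equivariant_choice {ι α : Type*} {τ : ι → ι} (hτ : Involutive τ) {c : α → α}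
    (hc : Involutive c) {S : ι → α → Prop} (hS : ∀ i a, S i a → S (τ i) (c a))
    (hex : ∀ i, ∃ a, S i a) :
    ∃ s : ι → α, ∀ i, S i (s i) ∧ (τ i ≠ i → s (τ i) = c (s i)) := by
  choose a ha using hex
  -- on each free orbit `{i, τ i}` the choice is made at the `WellOrderingRel`-smaller index
  let r : ι → ι → Prop := WellOrderingRel
  refine ⟨fun i => if r (τ i) i then c (a (τ i)) else a i, fun i => ⟨?_, fun hi => ?_⟩⟩ <;>
    dsimp only
  · split_ifs
    · simpa [hτ i] using hS _ _ (ha (τ i))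
    · exact ha i
  · by_cases hr : r (τ i) i
    · have : ¬ r (τ (τ i)) (τ i) := by rw [hτ i]; exact asymm hr
      rw [if_neg this, if_pos hr, hc]
    · have : r (τ (τ i)) (τ i) := by
        rw [hτ i]
        exact (trichotomous_of r i (τ i)).resolve_right fun h => h.elim (hi ∘ Eq.symm) hr
      rw [if_pos this, if_neg hr, hτ i]

end General

section Simplex

variable {ι : Type*} [Fintype ι]

noncomputable def supp (x : ι → ℝ) : Finset ι := {a | x a ≠ 0}

@[simp] lemma mem_supp {x : ι → ℝ} {a : ι} : a ∈ supp x ↔ x a ≠ 0 := by simp [supp]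

def face (G : Finset ι) : Set (ι → ℝ) := {x | x ∈ stdSimplex ℝ ι ∧ supp x ⊆ G}

def faceBoundary (G : Finset ι) : Set (ι → ℝ) := {x | x ∈ face G ∧ supp x ≠ G}

lemma supp_nonempty {x : ι → ℝ} (hx : x ∈ stdSimplex ℝ ι) : (supp x).Nonempty := by
  by_contra h
  have hzero : ∀ a, x a = 0 := fun a => by
    by_contra ha
    exact h ⟨a, mem_supp.2 ha⟩
  simpa [hzero] using hx.2

lemma mem_face_supp {x : ι → ℝ} (hx : x ∈ stdSimplex ℝ ι) : x ∈ face (supp x) :=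
  ⟨hx, subset_rfl⟩

lemma isClosed_face (G : Finset ι) : IsClosed (face G) := by
  have : face G = stdSimplex ℝ ι ∩ ⋂ (a : ι) (_ : a ∉ G), {x | x a = 0} := by
    ext x
    simp only [face, Finset.subset_iff, mem_supp, mem_ofPred_eq, mem_inter_iff, mem_iInter]
    exact and_congr_right fun _ => forall_congr' fun a => not_imp_comm
  rw [this]
  exact (isClosed_stdSimplex ℝ ι).inter <| isClosed_iInter fun a => isClosed_iInter fun _ =>
    isClosed_eq (continuous_apply a) continuous_const

lemma faceBoundary_eq_empty_of_card_eq_one {G : Finset ι} (hG : G.card = 1) :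
    faceBoundary G = ∅ := by
  obtain ⟨a, rfl⟩ := Finset.card_eq_one.1 hG
  refine eq_empty_of_forall_notMem fun x hx => hx.2 ?_
  exact (supp_nonempty hx.1.1).subset_singleton_iff.1 hx.1.2

noncomputable def glueFaces {Y : Type*} (N : ℕ) (f : (ι → ℝ) → Y)
    (s : Finset ι → (ι → ℝ) → Y) (x : ι → ℝ) : Y :=
  if (supp x).card ≤ N then f x else s (supp x) x

lemma eqOn_glueFaces_face {Y : Type*} {N : ℕ} {f : (ι → ℝ) → Y} {s : Finset ι → (ι → ℝ) → Y}
    {G : Finset ι} (hG : EqOn (s G) f (faceBoundary G)) (hcard : G.card = N + 1) :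
    EqOn (glueFaces N f s) (s G) (face G) := by
  intro x hx
  by_cases h : supp x = G
  · simp only [glueFaces, h, hcard, Nat.not_succ_le_self, if_false]
  · have := Finset.card_lt_card (Finset.ssubset_iff_subset_ne.2 ⟨hx.2, h⟩)
    simp only [glueFaces, show (supp x).card ≤ N by omega, if_true]
    exact (hG ⟨hx, h⟩).symm

variable {σ : ι → ι}

lemma supp_comp (hσ : Involutive σ) (x : ι → ℝ) : supp (x ∘ σ) = (supp x).image σ := by
  ext a
  simp only [mem_supp, comp_apply, Finset.mem_image]
  exact ⟨fun h => ⟨σ a, h, hσ a⟩, by rintro ⟨b, hb, rfl⟩; rwa [hσ b]⟩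

lemma comp_mem_stdSimplex (hσ : Involutive σ) {x : ι → ℝ} (hx : x ∈ stdSimplex ℝ ι) :
    x ∘ σ ∈ stdSimplex ℝ ι :=
  ⟨fun a => hx.1 (σ a), (Equiv.sum_comp hσ.toPerm x).trans hx.2⟩

lemma comp_mem_face (hσ : Involutive σ) {G : Finset ι} {x : ι → ℝ} (hx : x ∈ face (G.image σ)) :
    x ∘ σ ∈ face G := by
  refine ⟨comp_mem_stdSimplex hσ hx.1, ?_⟩
  rw [supp_comp hσ, ← image_image_of_involutive hσ G]
  exact Finset.image_subset_image hx.2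

lemma comp_mem_faceBoundary (hσ : Involutive σ) {G : Finset ι} {x : ι → ℝ}
    (hx : x ∈ faceBoundary (G.image σ)) : x ∘ σ ∈ faceBoundary G := by
  refine ⟨comp_mem_face hσ hx.1, fun h => hx.2 ?_⟩
  rw [← h, supp_comp hσ, image_image_of_involutive hσ]

end Simplex

section Barycentric

variable {ι : Type*} {E : Type*} [NormedAddCommGroup E] [NormedSpace ℝ E] {G : Finset ι}
  (b : AffineBasis G ℝ E)

noncomputable def baryCoords (y : E) : ι → ℝ :=
  fun a => if h : a ∈ G then b.coord ⟨a, h⟩ y else 0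

def baryPoint (x : ι → ℝ) : E := ∑ i : G, x i • b i

lemma continuous_baryCoords [FiniteDimensional ℝ E] : Continuous (baryCoords b) :=
  continuous_pi fun a => by
    unfold baryCoords
    split_ifs
    exacts [continuous_barycentric_coord b _, continuous_const]

lemma continuous_baryPoint : Continuous (baryPoint b) :=
  continuous_finsetSum _ fun i _ => (continuous_apply (i : ι)).smul continuous_const

lemma frontier_convexHull_range :
    frontier (convexHull ℝ (range b)) = {y | (∀ i, 0 ≤ b.coord i y) ∧ ∃ i, b.coord i y = 0} := by
  rw [frontier, ((finite_range b).isCompact_convexHull ℝ).isClosed.closure_eq,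
    b.interior_convexHull, b.convexHull_eq_nonneg_coord]
  ext y
  simp only [mem_sdiff, mem_ofPred_eq, not_forall, not_lt]
  exact and_congr_right fun h => exists_congr fun i => ⟨fun h' => le_antisymm h' (h i), le_of_eq⟩

variable [Fintype ι]

lemma sum_subtype_eq_one_of_mem_face {x : ι → ℝ} (hx : x ∈ face G) : ∑ i : G, x i = 1 := by
  rw [Finset.sum_coe_sort G x, ← hx.1.2]
  exact Finset.sum_subset G.subset_univ fun a _ ha => by
    by_contra h
    exact ha (hx.2 (mem_supp.2 h))

lemma coord_baryPoint {x : ι → ℝ} (hx : x ∈ face G) (i : G) :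
    b.coord i (baryPoint b x) = x i := by
  have hw := sum_subtype_eq_one_of_mem_face hx
  rw [baryPoint, ← Finset.affineCombination_eq_linear_combination _ _ _ hw,
    b.coord_apply_combination_of_mem (Finset.mem_univ i) hw]

lemma baryCoords_baryPoint {x : ι → ℝ} (hx : x ∈ face G) : baryCoords b (baryPoint b x) = x := by
  funext a
  by_cases ha : a ∈ G
  · rw [baryCoords, dif_pos ha, coord_baryPoint b hx]
  · rw [baryCoords, dif_neg ha]
    by_contra h
    exact ha (hx.2 (mem_supp.2 (Ne.symm h)))

lemma baryPoint_mem_convexHull {x : ι → ℝ} (hx : x ∈ face G) :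
    baryPoint b x ∈ convexHull ℝ (range b) := by
  rw [b.convexHull_eq_nonneg_coord]
  intro i
  rw [coord_baryPoint b hx]
  exact hx.1.1 i

lemma baryPoint_mem_frontier {x : ι → ℝ} (hx : x ∈ faceBoundary G) :
    baryPoint b x ∈ frontier (convexHull ℝ (range b)) := by
  obtain ⟨a, haG, hax⟩ := Finset.exists_of_ssubset (Finset.ssubset_iff_subset_ne.2 ⟨hx.1.2, hx.2⟩)
  rw [frontier_convexHull_range]
  refine ⟨fun i => ?_, ⟨a, haG⟩, ?_⟩ <;> rw [coord_baryPoint b hx.1]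
  · exact hx.1.1.1 i
  · simpa using hax

lemma baryCoords_mem_faceBoundary {y : E} (hy : y ∈ frontier (convexHull ℝ (range b))) :
    baryCoords b y ∈ faceBoundary G := by
  rw [frontier_convexHull_range] at hy
  obtain ⟨hnonneg, i, hi⟩ := hy
  have hsupp : supp (baryCoords b y) ⊆ G := fun a ha => by
    by_contra h
    simp [baryCoords, h] at ha
  refine ⟨⟨⟨fun a => ?_, ?_⟩, hsupp⟩, fun h => ?_⟩
  · unfold baryCoords
    split_ifs
    exacts [hnonneg _, le_rfl]
  · rw [← Finset.sum_subset G.subset_univ fun a _ ha => by simpa using fun h => ha (hsupp h)]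
    simp only [baryCoords]
    rw [Finset.sum_dite_of_true fun _ h => h]
    exact b.sum_coord_apply_eq_one y
  · have : (i : ι) ∈ supp (baryCoords b y) := h.symm ▸ i.2
    simp [baryCoords, hi] at this

end Barycentric

variable {ι : Type*} [Fintype ι]

lemma exists_ball_chart {n : ℕ} {G : Finset ι} (hG : G.card = n + 2) :
    ∃ (α : (ι → ℝ) → EuclideanSpace ℝ (Fin (n + 1)))
      (β : EuclideanSpace ℝ (Fin (n + 1)) → ι → ℝ), Continuous α ∧ Continuous β ∧
      MapsTo α (face G) (closedBall 0 1) ∧ MapsTo α (faceBoundary G) (sphere 0 1) ∧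
      MapsTo β (sphere 0 1) (faceBoundary G) ∧ LeftInvOn β α (faceBoundary G) := by
  obtain ⟨b⟩ : Nonempty (AffineBasis G ℝ (EuclideanSpace ℝ (Fin (n + 1)))) :=
    AffineBasis.exists_affineBasis_of_finiteDimensional (by simp [hG])
  set Δ := convexHull ℝ (range b)
  have hΔ : IsCompact Δ := (finite_range b).isCompact_convexHull ℝ
  obtain ⟨h, -, hclosure, hfrontier⟩ :=
    exists_homeomorph_image_interior_closure_frontier_eq_unitBall (convex_convexHull ℝ _)
      (interior_convexHull_nonempty_iff_affineSpan_eq_top.2 b.tot) hΔ.isBounded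
  rw [hΔ.isClosed.closure_eq] at hclosure
  refine ⟨h ∘ baryPoint b, baryCoords b ∘ h.symm, h.continuous.comp (continuous_baryPoint b),
    (continuous_baryCoords b).comp h.symm.continuous, fun x hx => ?_, fun x hx => ?_,
    fun z hz => ?_, fun x hx => ?_⟩
  · exact hclosure ▸ mem_image_of_mem h (baryPoint_mem_convexHull b hx)
  · exact hfrontier ▸ mem_image_of_mem h (baryPoint_mem_frontier b hx)
  · obtain ⟨y, hy, rfl⟩ := hfrontier ▸ hz
    simpa using baryCoords_mem_faceBoundary b hy
  · simp [baryCoords_baryPoint b hx.1]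

end OrderComplex

section Extension

open OrderComplex

variable {V : Type*} [Fintype V] {X : Set (V → ℝ)} {k : ℕ}

lemma KConnected.exists_extension_sphere (hX : KConnected X k) {n : ℕ} (hn : n ≤ k)
    {f : EuclideanSpace ℝ (Fin (n + 1)) → V → ℝ} (hf : ContinuousOn f (sphere 0 1))
    (hfX : MapsTo f (sphere 0 1) X) :
    ∃ g : EuclideanSpace ℝ (Fin (n + 1)) → V → ℝ, ContinuousOn g (closedBall 0 1) ∧
      MapsTo g (closedBall 0 1) X ∧ EqOn g f (sphere 0 1) := by
  obtain ⟨g, hg⟩ := hX.2 n hn ⟨fun z => ⟨f z, hfX z.2⟩, hf.domRestrict.subtype_mk _⟩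
  refine ⟨fun z => if h : z ∈ closedBall 0 1 then g ⟨z, h⟩ else 0, ?_, fun z hz => ?_,
    fun z hz => ?_⟩
  · rw [continuousOn_iff_continuous_domRestrict]
    exact (continuous_subtype_val.comp g.continuous).congr fun z => by
      show _ = dite _ _ _
      rw [dif_pos z.2]
      rfl
  · simp [hz]
  · show dite _ _ _ = _
    rw [dif_pos (sphere_subset_closedBall hz)]
    exact congrArg Subtype.val (hg ⟨z, hz⟩)

lemma KConnected.exists_extension_face (hX : KConnected X k) {ι : Type*} [Fintype ι]
    {G : Finset ι} (hne : G.Nonempty) (hG : G.card ≤ k + 2) {b : (ι → ℝ) → V → ℝ}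
    (hb : ContinuousOn b (faceBoundary G))
    (hbX : MapsTo b (faceBoundary G) X) :
    ∃ d : (ι → ℝ) → V → ℝ, ContinuousOn d (face G) ∧
      MapsTo d (face G) X ∧ EqOn d b (faceBoundary G) := by
  obtain hone | ⟨n, hn⟩ : G.card = 1 ∨ ∃ n, G.card = n + 2 :=
    (eq_or_lt_of_le hne.card_pos).imp Eq.symm fun h => ⟨G.card - 2, by omega⟩
  · obtain ⟨q, hq⟩ := hX.1
    refine ⟨fun _ => q, continuousOn_const, fun _ _ => hq, ?_⟩
    simp [faceBoundary_eq_empty_of_card_eq_one hone]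
  obtain ⟨α, β, hα, hβ, hαface, hαbdry, hβ_sphere, hβα⟩ := exists_ball_chart hn
  obtain ⟨g, hg, hgX, hgb⟩ := hX.exists_extension_sphere (n := n) (by omega)
    (hb.comp hβ.continuousOn hβ_sphere) (hbX.comp hβ_sphere)
  refine ⟨g ∘ α, hg.comp hα.continuousOn hαface, hgX.comp hαface, fun x hx => ?_⟩
  simp [hgb (hαbdry hx), hβα hx]

end Extension

namespace OrderComplex

section Skeleton

variable {P : Type*} [Fintype P] [PartialOrder P]

-- The `(N - 1)`-skeleton of the order complex: simplices are counted by their vertices.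
def skeleton (N : ℕ) : Set (P → ℝ) :=
  {x | x ∈ stdSimplex ℝ P ∧ IsChain (· ≤ ·) (supp x : Set P) ∧ (supp x).card ≤ N}

lemma skeleton_zero : skeleton 0 = (∅ : Set (P → ℝ)) :=
  eq_empty_of_forall_notMem fun _ hx => (supp_nonempty hx.1).card_pos.ne' (Nat.le_zero.1 hx.2.2)

lemma face_subset_skeleton {G : Finset P} (hG : IsChain (· ≤ ·) (G : Set P)) {N : ℕ}
    (hN : G.card ≤ N) : face G ⊆ skeleton N :=
  fun _ hx => ⟨hx.1, hG.mono (Finset.coe_subset.2 hx.2), (Finset.card_le_card hx.2).trans hN⟩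

lemma faceBoundary_subset_skeleton {G : Finset P} (hG : IsChain (· ≤ ·) (G : Set P)) {N : ℕ}
    (hN : G.card ≤ N + 1) : faceBoundary G ⊆ skeleton N := fun x hx => by
  have := Finset.card_lt_card (Finset.ssubset_iff_subset_ne.2 ⟨hx.1.2, hx.2⟩)
  exact ⟨hx.1.1, hG.mono (Finset.coe_subset.2 hx.1.2), by omega⟩

lemma continuousOn_skeleton {Y : Type*} [TopologicalSpace Y] {N : ℕ} {f : (P → ℝ) → Y}
    (hf : ∀ G : Finset P, IsChain (· ≤ ·) (G : Set P) → G.card ≤ N → ContinuousOn f (face G)) :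
    ContinuousOn f (skeleton N) := by
  have : skeleton N =
      ⋃ G : {G : Finset P // IsChain (· ≤ ·) (G : Set P) ∧ G.card ≤ N}, face G.1 := by
    refine Subset.antisymm (fun x hx => mem_iUnion.2 ⟨⟨supp x, hx.2⟩, mem_face_supp hx.1⟩) ?_
    exact iUnion_subset fun G => face_subset_skeleton G.2.1 G.2.2
  rw [this]
  exact (locallyFinite_of_finite _).continuousOn_iUnion (fun G => isClosed_face G.1)
    fun G => hf G.1 G.2.1 G.2.2

end Skeleton

variable {V P : Type*} [Fintype V] [Fintype P]

lemma mem_realization {K : Finset V → Prop} {x : V → ℝ} :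
    x ∈ realization K ↔ x ∈ stdSimplex ℝ V ∧ K (supp x) :=
  and_assoc.symm

def inducedRealization (K : Finset V → Prop) (S : Set V) : Set (V → ℝ) :=
  realization fun G : Finset V => K G ∧ (G : Set V) ⊆ S

lemma inducedRealization_mono (K : Finset V → Prop) {S T : Set V} (h : S ⊆ T) :
    inducedRealization K S ⊆ inducedRealization K T :=
  fun _ ⟨h₀, h₁, hK, hS⟩ => ⟨h₀, h₁, hK, hS.trans h⟩

lemma inducedRealization_subset (K : Finset V → Prop) (S : Set V) :
    inducedRealization K S ⊆ realization K :=
  fun _ ⟨h₀, h₁, hK, _⟩ => ⟨h₀, h₁, hK⟩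

lemma comp_mem_inducedRealization {K : Finset V → Prop} {ν : V → V} (hν : Involutive ν)
    (hK : ∀ G, K G → K (G.image ν)) {S : Set V} {q : V → ℝ}
    (hq : q ∈ inducedRealization K S) : q ∘ ν ∈ inducedRealization K (ν '' S) := by
  obtain ⟨hq, hqK, hqS⟩ := (mem_realization.1 hq)
  refine mem_realization.2 ⟨comp_mem_stdSimplex hν hq, ?_⟩
  rw [supp_comp hν]
  exact ⟨hK _ hqK, by rw [Finset.coe_image]; exact image_mono hqS⟩

variable [PartialOrder P]

variable (K : Finset V → Prop) (W : P → Set V) (ν : V → V) (νP : P → P)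

structure IsEquivariantCarrierMap (N : ℕ) (f : (P → ℝ) → V → ℝ) : Prop where
  continuousOn : ContinuousOn f (skeleton N)
  mem_carrier : ∀ x ∈ skeleton N, ∀ m ∈ upperBounds (supp x : Set P),
    f x ∈ inducedRealization K (W m)
  comp_eq : ∀ x ∈ skeleton N, f (x ∘ νP) = f x ∘ ν

structure IsFaceExtension (f d : (P → ℝ) → V → ℝ) (G : Finset P) : Prop where
  continuousOn : ContinuousOn d (face G)
  mem_carrier : ∀ x ∈ face G, ∀ m ∈ upperBounds (G : Set P), d x ∈ inducedRealization K (W m)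
  eqOn : EqOn d f (faceBoundary G)

variable {K W ν νP}

lemma isEquivariantCarrierMap_zero (f : (P → ℝ) → V → ℝ) :
    IsEquivariantCarrierMap K W ν νP 0 f :=
  ⟨by simp [skeleton_zero], by simp [skeleton_zero], by simp [skeleton_zero]⟩

lemma IsEquivariantCarrierMap.mapsTo_realization {N : ℕ} {f : (P → ℝ) → V → ℝ}
    (hf : IsEquivariantCarrierMap K W ν νP N f) : MapsTo f (skeleton N) (realization K) :=
  fun x hx => by
    obtain ⟨m, hm⟩ := exists_isGreatest_of_isChain hx.2.1 (supp_nonempty hx.1)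
    exact inducedRealization_subset K _ (hf.mem_carrier x hx m hm.2)

lemma IsEquivariantCarrierMap.exists_isFaceExtension {k N : ℕ} {f : (P → ℝ) → V → ℝ}
    (hWmono : ∀ σ τ : P, σ ≤ τ → W σ ⊆ W τ)
    (hWconn : ∀ σ : P, KConnected (inducedRealization K (W σ)) k)
    (hdim : ∀ G : Finset P, IsChain (· ≤ ·) (G : Set P) → G.card ≤ k + 2)
    (hf : IsEquivariantCarrierMap K W ν νP N f) {G : Finset P}
    (hG : IsChain (· ≤ ·) (G : Set P)) (hcard : G.card = N + 1) :
    ∃ d, IsFaceExtension K W f d G := by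
  have hne : G.Nonempty := Finset.card_pos.1 (by omega)
  obtain ⟨m, hmG, hm⟩ := exists_isGreatest_of_isChain hG hne
  have hbdry := faceBoundary_subset_skeleton hG hcard.le
  obtain ⟨d, hd, hdX, hdf⟩ := (hWconn m).exists_extension_face hne (hdim G hG)
    (hf.continuousOn.mono hbdry)
    fun x hx => hf.mem_carrier x (hbdry hx) m fun a ha => hm (hx.1.2 ha)
  exact ⟨d, ⟨hd, fun x hx m' hm' =>
    inducedRealization_mono K (hWmono m m' (hm' hmG)) (hdX hx), hdf⟩⟩

lemma IsFaceExtension.conj {N : ℕ} {f d : (P → ℝ) → V → ℝ} {G : Finset P}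
    (hν : Involutive ν) (hK : ∀ G, K G → K (G.image ν)) (hνP : Involutive νP)
    (hνPmono : Monotone νP) (hWν : ∀ σ : P, W (νP σ) = ν '' W σ)
    (hf : IsEquivariantCarrierMap K W ν νP N f)
    (hG : IsChain (· ≤ ·) (G.image νP : Set P)) (hcard : G.card ≤ N + 1)
    (hd : IsFaceExtension K W f d G) :
    IsFaceExtension K W f (fun x => d (x ∘ νP) ∘ ν) (G.image νP) := by
  refine ⟨?_, fun x hx m hm => ?_, fun x hx => ?_⟩
  · exact (continuous_pi fun v => continuous_apply (ν v)).comp_continuousOn <|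
      hd.continuousOn.comp (continuous_pi fun a => continuous_apply (νP a)).continuousOn
        fun x hx => comp_mem_face hνP hx
  · have hm' : νP m ∈ upperBounds (G : Set P) := fun a ha => by
      simpa [hνP a] using hνPmono (hm (Finset.mem_coe.2 (Finset.mem_image_of_mem νP ha)))
    have := comp_mem_inducedRealization hν hK (hd.mem_carrier _ (comp_mem_face hνP hx) _ hm')
    rwa [← hWν, hνP] at this
  · have hx' := faceBoundary_subset_skeleton hG (Finset.card_image_le.trans hcard) hx
    simp only [hd.eqOn (comp_mem_faceBoundary hνP hx), hf.comp_eq x hx', comp_assoc,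
      hν.comp_self, comp_id]

lemma IsEquivariantCarrierMap.exists_faceExtensions {k N : ℕ} {f : (P → ℝ) → V → ℝ}
    (hν : Involutive ν) (hK : ∀ G, K G → K (G.image ν)) (hνP : Involutive νP)
    (hνPmono : Monotone νP)
    (hPfree : ∀ G : Finset P, IsChain (· ≤ ·) (G : Set P) → G.Nonempty →
      Disjoint G (G.image νP))
    (hdim : ∀ G : Finset P, IsChain (· ≤ ·) (G : Set P) → G.card ≤ k + 2)
    (hWν : ∀ σ : P, W (νP σ) = ν '' W σ) (hWmono : ∀ σ τ : P, σ ≤ τ → W σ ⊆ W τ)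
    (hWconn : ∀ σ : P, KConnected (inducedRealization K (W σ)) k)
    (hf : IsEquivariantCarrierMap K W ν νP N f) :
    ∃ s : Finset P → (P → ℝ) → V → ℝ, ∀ G : Finset P, IsChain (· ≤ ·) (G : Set P) →
      G.card = N + 1 →
        IsFaceExtension K W f (s G) G ∧ s (G.image νP) = fun x => s G (x ∘ νP) ∘ ν := by
  have hconj : Involutive fun (d : (P → ℝ) → V → ℝ) x => d (x ∘ νP) ∘ ν := fun d => by
    simp only [comp_assoc, hνP.comp_self, hν.comp_self, comp_id]
  obtain ⟨s, hs⟩ := exists_equivariant_choice (image_image_of_involutive hνP) hconj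
    (S := fun G d => IsChain (· ≤ ·) (G : Set P) → G.card = N + 1 → IsFaceExtension K W f d G)
    (fun G d hd hG' hcard' => by
      have hG : IsChain (· ≤ ·) (G : Set P) := by
        simpa [image_image_of_involutive hνP] using isChain_image hνPmono hG'
      rw [Finset.card_image_of_injective _ hνP.injective] at hcard'
      exact (hd hG hcard').conj hν hK hνP hνPmono hWν hf hG' hcard'.le)
    (fun G => by
      by_cases hG : IsChain (· ≤ ·) (G : Set P) ∧ G.card = N + 1
      · obtain ⟨d, hd⟩ := hf.exists_isFaceExtension hWmono hWconn hdim hG.1 hG.2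
        exact ⟨d, fun _ _ => hd⟩
      · exact ⟨f, fun h h' => absurd ⟨h, h'⟩ hG⟩)
  refine ⟨s, fun G hG hcard => ⟨(hs G).1 hG hcard, (hs G).2 fun h => ?_⟩⟩
  have hne : G.Nonempty := Finset.card_pos.1 (by omega)
  have hdisj := hPfree G hG hne
  rw [h] at hdisj
  exact hne.ne_empty (disjoint_self.1 hdisj)

lemma IsEquivariantCarrierMap.glueFaces_succ {N : ℕ} {f : (P → ℝ) → V → ℝ}
    {s : Finset P → (P → ℝ) → V → ℝ} (hνP : Involutive νP)
    (hf : IsEquivariantCarrierMap K W ν νP N f)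
    (hs : ∀ G : Finset P, IsChain (· ≤ ·) (G : Set P) → G.card = N + 1 →
      IsFaceExtension K W f (s G) G ∧ s (G.image νP) = fun x => s G (x ∘ νP) ∘ ν) :
    IsEquivariantCarrierMap K W ν νP (N + 1) (glueFaces N f s) := by
  refine ⟨continuousOn_skeleton fun G hG hcard => ?_, fun x hx m hm => ?_, fun x hx => ?_⟩
  · rcases hcard.lt_or_eq with hlt | heq
    · exact (hf.continuousOn.mono (face_subset_skeleton hG (by omega))).congr fun x hx =>
        if_pos ((Finset.card_le_card hx.2).trans (by omega))
    · exact (hs G hG heq).1.continuousOn.congr (eqOn_glueFaces_face (hs G hG heq).1.eqOn heq)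
  · by_cases h : (supp x).card ≤ N
    · simp only [glueFaces, if_pos h]
      exact hf.mem_carrier x ⟨hx.1, hx.2.1, h⟩ m hm
    · simp only [glueFaces, if_neg h]
      have := hx.2.2
      exact (hs _ hx.2.1 (by omega)).1.mem_carrier x (mem_face_supp hx.1) m hm
  · have hcard := Finset.card_image_of_injective (supp x) hνP.injective
    by_cases h : (supp x).card ≤ N
    · simp only [glueFaces, supp_comp hνP, hcard, if_pos h]
      exact hf.comp_eq x ⟨hx.1, hx.2.1, h⟩
    · have := hx.2.2
      simp only [glueFaces, supp_comp hνP, hcard, if_neg h, (hs _ hx.2.1 (by omega)).2, comp_assoc,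
        hνP.comp_self, comp_id]

lemma exists_isEquivariantCarrierMap {k : ℕ} (hν : Involutive ν)
    (hK : ∀ G, K G → K (G.image ν)) (hνP : Involutive νP) (hνPmono : Monotone νP)
    (hPfree : ∀ G : Finset P, IsChain (· ≤ ·) (G : Set P) → G.Nonempty →
      Disjoint G (G.image νP))
    (hdim : ∀ G : Finset P, IsChain (· ≤ ·) (G : Set P) → G.card ≤ k + 2)
    (hWν : ∀ σ : P, W (νP σ) = ν '' W σ) (hWmono : ∀ σ τ : P, σ ≤ τ → W σ ⊆ W τ)
    (hWconn : ∀ σ : P, KConnected (inducedRealization K (W σ)) k) (N : ℕ) :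
    ∃ f, IsEquivariantCarrierMap K W ν νP N f := by
  induction N with
  | zero => exact ⟨0, isEquivariantCarrierMap_zero 0⟩
  | succ N ih =>
    obtain ⟨f, hf⟩ := ih
    obtain ⟨s, hs⟩ := hf.exists_faceExtensions hν hK hνP hνPmono hPfree hdim hWν hWmono hWconn
    exact ⟨_, hf.glueFaces_succ hνP hs⟩

end OrderComplex

open OrderComplex in
theorem equivariant_map_into_connected_subcomplexes_general
    {V P : Type*} [Fintype V] [Fintype P] [PartialOrder P] (k : ℕ)
    (K : Finset V → Prop)
    (ν : V → V) (hν : Function.Involutive ν)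
    (hsimp : ∀ G : Finset V, K G → K (G.image ν))
    (νP : P → P) (hνP : Function.Involutive νP) (hνPmono : Monotone νP)
    (hPfree : ∀ G : Finset P, IsChain (· ≤ ·) (G : Set P) → G.Nonempty →
      Disjoint G (G.image νP))
    (hdim : ∀ G : Finset P, IsChain (· ≤ ·) (G : Set P) → G.card ≤ k + 2)
    (W : P → Set V)
    (hWν : ∀ σ : P, W (νP σ) = ν '' W σ)
    (hWmono : ∀ σ τ : P, σ ≤ τ → W σ ⊆ W τ)
    (hWconn : ∀ σ : P,
      KConnected (realization fun G : Finset V => K G ∧ (G : Set V) ⊆ W σ) k) :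
    ∃ f : C(realization fun G : Finset P => IsChain (· ≤ ·) (G : Set P),
        realization K),
      (∀ x y : realization fun G : Finset P => IsChain (· ≤ ·) (G : Set P),
        (y : P → ℝ) = (x : P → ℝ) ∘ νP →
        ((f y : V → ℝ)) = (f x : V → ℝ) ∘ ν) ∧
      (∀ x : realization fun G : Finset P => IsChain (· ≤ ·) (G : Set P),
        ∀ σ : P, (x : P → ℝ) σ ≠ 0 → (∀ τ : P, (x : P → ℝ) τ ≠ 0 → τ ≤ σ) →
          ∀ v : V, (f x : V → ℝ) v ≠ 0 → v ∈ W σ) := by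
  obtain ⟨f, hf⟩ := exists_isEquivariantCarrierMap hν hsimp hνP hνPmono hPfree hdim hWν hWmono
    hWconn (Fintype.card P)
  have hL : (realization fun G : Finset P => IsChain (· ≤ ·) (G : Set P)) ⊆
      skeleton (Fintype.card P) := fun x hx =>
    ⟨⟨hx.1, hx.2.1⟩, hx.2.2, Finset.card_le_univ _⟩
  refine ⟨⟨fun x => ⟨f x, hf.mapsTo_realization (hL x.2)⟩,
    (hf.continuousOn.mono hL).domRestrict.subtype_mk _⟩, fun x y hyx => ?_,
    fun x σ _ hσ v hv => ?_⟩
  · show f y = f x ∘ ν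
    rw [hyx]
    exact hf.comp_eq x (hL x.2)
  · exact (hf.mem_carrier x (hL x.2) σ fun τ hτ => hσ τ (mem_supp.1 hτ)).2.2.2 (mem_supp.2 hv)

/-- Let `K` be a free ℤ₂ simplicial complex (involution `ν`), and let
`L` be the order complex of a finite ℤ₂-poset `P` (involution `νP`) of dimension
`k + 1` (all chains have at most `k + 2` elements).  Given vertex subsets `W σ ⊆ V`
indexed by `σ ∈ P` with `W (νP σ) = ν '' W σ`, `W` monotone along the order, and each
induced subcomplex `K[W σ]` `k`-connected, there is a continuous ℤ₂-map
`f : |L| → |K|` mapping each simplex (chain) with top element `σ` into `|K[W σ]|`. -/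
theorem equivariant_map_into_connected_subcomplexes
    {V P : Type*} [Fintype V] [Fintype P] [PartialOrder P] (k : ℕ)
    (K : Finset V → Prop)
    (hdown : ∀ G G' : Finset V, G' ⊆ G → K G → K G')
    (ν : V → V) (hν : Function.Involutive ν)
    (hsimp : ∀ G : Finset V, K G → K (G.image ν))
    (hfree : ∀ G : Finset V, K G → G.Nonempty → Disjoint G (G.image ν))
    (νP : P → P) (hνP : Function.Involutive νP) (hνPmono : Monotone νP)
    (hPfree : ∀ G : Finset P, IsChain (· ≤ ·) (G : Set P) → G.Nonempty →
      Disjoint G (G.image νP))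
    (hdim : ∀ G : Finset P, IsChain (· ≤ ·) (G : Set P) → G.card ≤ k + 2)
    (W : P → Set V)
    (hWν : ∀ σ : P, W (νP σ) = ν '' W σ)
    (hWmono : ∀ σ τ : P, σ ≤ τ → W σ ⊆ W τ)
    (hWconn : ∀ σ : P,
      KConnected (realization fun G : Finset V => K G ∧ (G : Set V) ⊆ W σ) k) :
    ∃ f : C(realization fun G : Finset P => IsChain (· ≤ ·) (G : Set P),
        realization K),
      (∀ x y : realization fun G : Finset P => IsChain (· ≤ ·) (G : Set P),
        (y : P → ℝ) = (x : P → ℝ) ∘ νP →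
        ((f y : V → ℝ)) = (f x : V → ℝ) ∘ ν) ∧
      (∀ x : realization fun G : Finset P => IsChain (· ≤ ·) (G : Set P),
        ∀ σ : P, (x : P → ℝ) σ ≠ 0 → (∀ τ : P, (x : P → ℝ) τ ≠ 0 → τ ≤ σ) →
          ∀ v : V, (f x : V → ℝ) v ≠ 0 → v ∈ W σ) :=
  equivariant_map_into_connected_subcomplexes_general k K ν hν hsimp νP hνP hνPmono hPfree hdim W
    hWν hWmono hWconn
end
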